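/- There is an absolute constant c such that for every prime ℓ ≥ 5 and each 1 ≤ i ≤ 5, the image of C^i(ℓ) ∩ B(ℓ) under the quotient map B(ℓ) → B(ℓ)/U'(ℓ) has cardinality at most c (in particular, the cardinality is bounded independently of ℓ). -/
import Mathlib


open Matrix Polynomial

/-- `G(ℓ) = {(M₁, M₂) ∈ GL₂(F_ℓ)×GL₂(F_ℓ) : det M₁ = det M₂}`. -/
def GSet (ℓ : ℕ) : Set (GL (Fin 2) (ZMod ℓ) × GL (Fin 2) (ZMod ℓ)) :=
  {M | M.1.val.det = M.2.val.det}

/-- `B(ℓ)`: the pairs in `G(ℓ)` of upper triangular matrices. -/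
def BSet (ℓ : ℕ) : Set (GL (Fin 2) (ZMod ℓ) × GL (Fin 2) (ZMod ℓ)) :=
  {M | M ∈ GSet ℓ ∧ M.1.val 1 0 = 0 ∧ M.2.val 1 0 = 0}

/-- `U(ℓ)`: the pairs in `G(ℓ)` of upper triangular matrices with all diagonal
entries equal to `1`. -/
def USet (ℓ : ℕ) : Set (GL (Fin 2) (ZMod ℓ) × GL (Fin 2) (ZMod ℓ)) :=
  {M | M ∈ GSet ℓ ∧
    M.1.val 1 0 = 0 ∧ M.1.val 0 0 = 1 ∧ M.1.val 1 1 = 1 ∧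
    M.2.val 1 0 = 0 ∧ M.2.val 0 0 = 1 ∧ M.2.val 1 1 = 1}

/-- `U'(ℓ)`: the pairs in `G(ℓ)` of upper triangular matrices all of whose diagonal
entries are equal to a common `λ ∈ F_ℓˣ` (the invertibility being automatic). -/
def U'Set (ℓ : ℕ) : Set (GL (Fin 2) (ZMod ℓ) × GL (Fin 2) (ZMod ℓ)) :=
  {M | M ∈ GSet ℓ ∧
    M.1.val 1 0 = 0 ∧ M.2.val 1 0 = 0 ∧
    M.1.val 0 0 = M.1.val 1 1 ∧ M.2.val 0 0 = M.2.val 1 1 ∧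
    M.1.val 0 0 = M.2.val 0 0}

/-- `T(ℓ)`: the pairs in `G(ℓ)` of diagonal matrices. -/
def TSet (ℓ : ℕ) : Set (GL (Fin 2) (ZMod ℓ) × GL (Fin 2) (ZMod ℓ)) :=
  {M | M ∈ GSet ℓ ∧
    M.1.val 1 0 = 0 ∧ M.1.val 0 1 = 0 ∧ M.2.val 1 0 = 0 ∧ M.2.val 0 1 = 0}

/-- The five reference quartic polynomials `f₁ = X⁴+μX²+μ²`, `f₂ = X⁴−μX²+μ²`,
`f₃ = X⁴+μ²`, `f₄ = (X²−μ)²`, `f₅ = (X²+μ)²`. -/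
noncomputable def fPoly (ℓ : ℕ) (i : ℕ) (μ : ZMod ℓ) : Polynomial (ZMod ℓ) :=
  if i = 1 then X ^ 4 + C μ * X ^ 2 + C (μ ^ 2)
  else if i = 2 then X ^ 4 - C μ * X ^ 2 + C (μ ^ 2)
  else if i = 3 then X ^ 4 + C (μ ^ 2)
  else if i = 4 then (X ^ 2 - C μ) ^ 2
  else (X ^ 2 + C μ) ^ 2

/-- `C^i(ℓ)`: the set of `M ∈ G(ℓ)` whose characteristic polynomial (the product of the
characteristic polynomials of the two components) equals `f_i` for some `μ ∈ F_ℓˣ` and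
factors as `(X−λ₁)(X−λ₂)(X−λ₃)(X−λ₄)` with `λ₁, λ₂, λ₃, λ₄ ∈ F_ℓˣ`. -/
def CSet (ℓ : ℕ) (i : ℕ) : Set (GL (Fin 2) (ZMod ℓ) × GL (Fin 2) (ZMod ℓ)) :=
  {M | M ∈ GSet ℓ ∧ ∃ μ lam₁ lam₂ lam₃ lam₄ : ZMod ℓ,
    μ ≠ 0 ∧ lam₁ ≠ 0 ∧ lam₂ ≠ 0 ∧ lam₃ ≠ 0 ∧ lam₄ ≠ 0 ∧
    M.1.val.charpoly * M.2.val.charpoly = fPoly ℓ i μ ∧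
    M.1.val.charpoly * M.2.val.charpoly =
      (X - C lam₁) * (X - C lam₂) * (X - C lam₃) * (X - C lam₄)}

lemma charpoly_tri {ℓ : ℕ} (M : Matrix (Fin 2) (Fin 2) (ZMod ℓ)) (h : M 1 0 = 0) :
    M.charpoly = (X - C (M 0 0)) * (X - C (M 1 1)) := by
  rw [Matrix.charpoly, Matrix.det_fin_two, Matrix.charmatrix_apply_eq, Matrix.charmatrix_apply_eq,
    Matrix.charmatrix_apply_ne _ _ _ (by decide), Matrix.charmatrix_apply_ne _ _ _ (by decide), h]
  simp

lemma ratio12 {K : Type*} [Field K] {r s v : K} (hv : v ≠ 0) (hs : s ≠ 0)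
    (h1 : r ^ 12 = v) (h2 : s ^ 12 = v) : (r * s⁻¹) ^ 12 = 1 := by
  rw [mul_pow, inv_pow, h1, h2, mul_inv_cancel₀ hv]

lemma root_ratio {ℓ : ℕ} [Fact ℓ.Prime] {i : ℕ} (h1 : 1 ≤ i) (h5 : i ≤ 5)
    {μ r s : ZMod ℓ} (hμ : μ ≠ 0) (hs : s ≠ 0)
    (her : (fPoly ℓ i μ).eval r = 0) (hes : (fPoly ℓ i μ).eval s = 0) :
    (r * s⁻¹) ^ 12 = 1 := by
  interval_cases i <;> norm_num [fPoly] at her hes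
  · exact ratio12 (v := μ ^ 6) (pow_ne_zero 6 hμ) hs
      (by linear_combination ((r^6 + μ^3) * (r^2 - μ)) * her)
      (by linear_combination ((s^6 + μ^3) * (s^2 - μ)) * hes)
  · exact ratio12 (v := μ ^ 6) (pow_ne_zero 6 hμ) hs
      (by linear_combination ((r^6 - μ^3) * (r^2 + μ)) * her)
      (by linear_combination ((s^6 - μ^3) * (s^2 + μ)) * hes)
  · exact ratio12 (v := -μ ^ 6) (neg_ne_zero.mpr (pow_ne_zero 6 hμ)) hs
      (by linear_combination (r^8 - μ^2 * r^4 + μ^4) * her)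
      (by linear_combination (s^8 - μ^2 * s^4 + μ^4) * hes)
  · have hr' : r ^ 2 - μ = 0 := her
    have hs' : s ^ 2 - μ = 0 := hes
    exact ratio12 (v := μ ^ 6) (pow_ne_zero 6 hμ) hs
      (by linear_combination (r^10 + μ*r^8 + μ^2*r^6 + μ^3*r^4 + μ^4*r^2 + μ^5) * hr')
      (by linear_combination (s^10 + μ*s^8 + μ^2*s^6 + μ^3*s^4 + μ^4*s^2 + μ^5) * hs')
  · have hr' : r ^ 2 + μ = 0 := her
    have hs' : s ^ 2 + μ = 0 := hes
    exact ratio12 (v := μ ^ 6) (pow_ne_zero 6 hμ) hs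
      (by linear_combination (r^10 - μ*r^8 + μ^2*r^6 - μ^3*r^4 + μ^4*r^2 - μ^5) * hr')
      (by linear_combination (s^10 - μ*s^8 + μ^2*s^6 - μ^3*s^4 + μ^4*s^2 - μ^5) * hs')

lemma diag_ne_zero {ℓ : ℕ} [Fact ℓ.Prime] (A : GL (Fin 2) (ZMod ℓ))
    (h : A.val 1 0 = 0) : A.val 0 0 ≠ 0 ∧ A.val 1 1 ≠ 0 := by
  have hu : IsUnit (A.val.det) := (Matrix.isUnit_iff_isUnit_det _).mp ⟨A, rfl⟩
  rw [Matrix.det_fin_two, h] at hu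
  have := hu.ne_zero
  simp only [mul_zero, sub_zero] at this
  exact ⟨left_ne_zero_of_mul this, right_ne_zero_of_mul this⟩

lemma coset_mem_iff {ℓ : ℕ} [Fact ℓ.Prime]
    (m x : GL (Fin 2) (ZMod ℓ) × GL (Fin 2) (ZMod ℓ))
    (h1 : m.1.val 1 0 = 0) (h2 : m.2.val 1 0 = 0) :
    m⁻¹ * x ∈ U'Set ℓ ↔
      (x.1.val 1 0 = 0 ∧ x.2.val 1 0 = 0 ∧
       x.1.val 1 1 = (m.1.val 1 1 * (m.1.val 0 0)⁻¹) * x.1.val 0 0 ∧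
       x.2.val 0 0 = (m.2.val 0 0 * (m.1.val 0 0)⁻¹) * x.1.val 0 0 ∧
       x.2.val 1 1 = (m.2.val 1 1 * (m.1.val 0 0)⁻¹) * x.1.val 0 0) := by
  obtain ⟨ha, hd⟩ := diag_ne_zero m.1 h1
  obtain ⟨ha', hd'⟩ := diag_ne_zero m.2 h2
  set u := m⁻¹ * x with hu
  have hprod : m * u = x := by rw [hu, mul_inv_cancel_left]
  have hv1 : m.1.val * u.1.val = x.1.val := by
    rw [← hprod]; rfl
  have hv2 : m.2.val * u.2.val = x.2.val := by
    rw [← hprod]; rfl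
  have e110 := congrFun (congrFun hv1 1) 0
  have e100 := congrFun (congrFun hv1 0) 0
  have e111 := congrFun (congrFun hv1 1) 1
  have e210 := congrFun (congrFun hv2 1) 0
  have e200 := congrFun (congrFun hv2 0) 0
  have e211 := congrFun (congrFun hv2 1) 1
  simp only [Matrix.mul_apply, Fin.sum_univ_two, h1, h2, zero_mul, zero_add] at e110 e100 e111 e210 e200 e211
  constructor
  · rintro ⟨hG, u110, u210, ud1, ud2, ueq⟩
    rw [u110, mul_zero] at e110 e100
    rw [u210, mul_zero] at e210 e200
    rw [add_zero] at e100 e200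
    refine ⟨e110.symm, e210.symm, ?_, ?_, ?_⟩
    · rw [← e111, ← e100, ← ud1]; field_simp
    · rw [← e200, ← e100, ← ueq]; field_simp
    · rw [← e211, ← e100, ← ud2, ← ueq]; field_simp
  · rintro ⟨x110, x210, c1, c2, c3⟩
    rw [x110] at e110
    rw [x210] at e210
    -- u 1 0 entries vanish
    have u110 : u.1.val 1 0 = 0 := (mul_eq_zero.mp e110).resolve_left hd
    have u210 : u.2.val 1 0 = 0 := (mul_eq_zero.mp e210).resolve_left hd'
    rw [u110, mul_zero, add_zero] at e100
    rw [u210, mul_zero, add_zero] at e200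
    have u100 : u.1.val 0 0 = (m.1.val 0 0)⁻¹ * x.1.val 0 0 :=
      mul_left_cancel₀ ha (by rw [e100]; field_simp)
    have u111 : u.1.val 1 1 = (m.1.val 0 0)⁻¹ * x.1.val 0 0 :=
      mul_left_cancel₀ hd (by rw [e111, c1]; ring)
    have u200 : u.2.val 0 0 = (m.1.val 0 0)⁻¹ * x.1.val 0 0 :=
      mul_left_cancel₀ ha' (by rw [e200, c2]; ring)
    have u211 : u.2.val 1 1 = (m.1.val 0 0)⁻¹ * x.1.val 0 0 :=
      mul_left_cancel₀ hd' (by rw [e211, c3]; ring)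
    refine ⟨?_, u110, u210, by rw [u100, u111], by rw [u200, u211], by rw [u100, u200]⟩
    show u.1.val.det = u.2.val.det
    rw [Matrix.det_fin_two, Matrix.det_fin_two, u110, u210, u100, u111, u200, u211]
    ring

/-- There is an absolute constant `c` such that for every prime `ℓ ≥ 5`
and each `1 ≤ i ≤ 5`, the image of `C^i(ℓ) ∩ B(ℓ)` under the quotient map
`B(ℓ) → B(ℓ)/U'(ℓ)` has cardinality at most `c`.  The image in the quotient is encoded as
the collection of left cosets `m·U'(ℓ)` as `m` ranges over `C^i(ℓ) ∩ B(ℓ)`. -/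
theorem glpair_quotient_image_bounded :
    ∃ c : ℕ, ∀ ℓ : ℕ, ℓ.Prime → 5 ≤ ℓ → ∀ i : ℕ, 1 ≤ i → i ≤ 5 →
      Set.ncard {S : Set (GL (Fin 2) (ZMod ℓ) × GL (Fin 2) (ZMod ℓ)) |
        ∃ m ∈ CSet ℓ i ∩ BSet ℓ, S = {x | m⁻¹ * x ∈ U'Set ℓ}} ≤ c := by
  classical
  use 1728
  intro ℓ hp h5 i hi1 hi5
  haveI : Fact ℓ.Prime := ⟨hp⟩
  set F : Finset (ZMod ℓ) := (Polynomial.nthRoots 12 (1 : ZMod ℓ)).toFinset with hF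
  set g : ZMod ℓ × ZMod ℓ × ZMod ℓ → Set (GL (Fin 2) (ZMod ℓ) × GL (Fin 2) (ZMod ℓ)) :=
    fun t => {x | x.1.val 1 0 = 0 ∧ x.2.val 1 0 = 0 ∧
      x.1.val 1 1 = t.1 * x.1.val 0 0 ∧
      x.2.val 0 0 = t.2.1 * x.1.val 0 0 ∧
      x.2.val 1 1 = t.2.2 * x.1.val 0 0} with hg
  have hsub : {S : Set (GL (Fin 2) (ZMod ℓ) × GL (Fin 2) (ZMod ℓ)) |
      ∃ m ∈ CSet ℓ i ∩ BSet ℓ, S = {x | m⁻¹ * x ∈ U'Set ℓ}} ⊆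
      g '' ↑(F ×ˢ F ×ˢ F) := by
    rintro S ⟨m, ⟨⟨_, μ, l1, l2, l3, l4, hμ, -, -, -, -, hfi, -⟩, -, hm1, hm2⟩, rfl⟩
    obtain ⟨ha, hd⟩ := diag_ne_zero m.1 hm1
    obtain ⟨ha', hd'⟩ := diag_ne_zero m.2 hm2
    have hc1 : m.1.val.charpoly = (X - C (m.1.val 0 0)) * (X - C (m.1.val 1 1)) :=
      charpoly_tri _ hm1
    have hc2 : m.2.val.charpoly = (X - C (m.2.val 0 0)) * (X - C (m.2.val 1 1)) :=
      charpoly_tri _ hm2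
    have evr : ∀ r : ZMod ℓ, (r = m.1.val 0 0 ∨ r = m.1.val 1 1 ∨
        r = m.2.val 0 0 ∨ r = m.2.val 1 1) → (fPoly ℓ i μ).eval r = 0 := by
      intro r hr
      rw [← hfi, hc1, hc2]
      rcases hr with rfl | rfl | rfl | rfl <;> simp
    have hmemF : ∀ r : ZMod ℓ, (r = m.1.val 0 0 ∨ r = m.1.val 1 1 ∨
        r = m.2.val 0 0 ∨ r = m.2.val 1 1) → r * (m.1.val 0 0)⁻¹ ∈ F := by
      intro r hr
      rw [hF, Multiset.mem_toFinset,
        Polynomial.mem_nthRoots (by norm_num : (0:ℕ) < 12)]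
      exact root_ratio hi1 hi5 hμ ha (evr r hr) (evr _ (Or.inl rfl))
    refine ⟨(m.1.val 1 1 * (m.1.val 0 0)⁻¹, m.2.val 0 0 * (m.1.val 0 0)⁻¹,
      m.2.val 1 1 * (m.1.val 0 0)⁻¹), ?_, ?_⟩
    · simp only [Finset.coe_product, Set.mem_prod]
      exact ⟨hmemF _ (Or.inr (Or.inl rfl)), hmemF _ (Or.inr (Or.inr (Or.inl rfl))),
        hmemF _ (Or.inr (Or.inr (Or.inr rfl)))⟩
    · ext x
      simp only [hg, Set.mem_setOf_eq]
      exact (coset_mem_iff m x hm1 hm2).symm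
  calc Set.ncard {S : Set (GL (Fin 2) (ZMod ℓ) × GL (Fin 2) (ZMod ℓ)) |
        ∃ m ∈ CSet ℓ i ∩ BSet ℓ, S = {x | m⁻¹ * x ∈ U'Set ℓ}}
      ≤ (g '' ↑(F ×ˢ F ×ˢ F)).ncard :=
        Set.ncard_le_ncard hsub ((F ×ˢ F ×ˢ F).finite_toSet.image g)
    _ ≤ (↑(F ×ˢ F ×ˢ F) : Set (ZMod ℓ × ZMod ℓ × ZMod ℓ)).ncard :=
        Set.ncard_image_le (F ×ˢ F ×ˢ F).finite_toSet
    _ = (F ×ˢ F ×ˢ F).card := Set.ncard_coe_finset _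
    _ ≤ 1728 := by
        have hcard : F.card ≤ 12 := le_trans (Multiset.toFinset_card_le _)
          (by simpa using Polynomial.card_nthRoots 12 (1 : ZMod ℓ))
        rw [Finset.card_product, Finset.card_product]
        calc F.card * (F.card * F.card) ≤ 12 * (12 * 12) :=
              Nat.mul_le_mul hcard (Nat.mul_le_mul hcard hcard)
          _ = 1728 := by norm_num
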